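/- If f : (0,∞) → ℝ is strictly convex, then the function g(α) := α · f(1/α) is also strictly convex on (0,∞). -/

import Mathlib

/-!
Inversion turns the convex combination `z = a x + b y` of `x, y > 0` into a convex combination
of `1/x` and `1/y`: `1/z = (a x / z) • (1/x) + (b y / z) • (1/y)`. Strict convexity of `f` at
these reweighted points, multiplied through by `z`, is strict convexity of `α ↦ α f (1/α)`.
-/

lemma smul_one_div_add_smul_one_div {x y : ℝ} (a b z : ℝ) (hx : x ≠ 0) (hy : y ≠ 0) :
    (a * x / z) • (1 / x) + (b * y / z) • (1 / y) = (a + b) / z := by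
  simp only [smul_eq_mul]
  field_simp

/-- If `f` is strictly convex on `(0, ∞)`, then `g(α) := α * f (1/α)` is also
strictly convex on `(0, ∞)`. -/
theorem strictConvexOn_smul_inv_comp (f : ℝ → ℝ)
    (hf : StrictConvexOn ℝ (Set.Ioi (0 : ℝ)) f) :
    StrictConvexOn ℝ (Set.Ioi (0 : ℝ)) (fun α => α * f (1 / α)) := by
  refine ⟨convex_Ioi 0, fun x (hx : 0 < x) y (hy : 0 < y) hxy a b ha hb hab => ?_⟩
  set z := a * x + b * y
  have hz : 0 < z := by positivity
  have hinv_ne : 1 / x ≠ 1 / y := by simpa only [one_div, ne_eq, inv_inj] using hxy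
  have hweights : a * x / z + b * y / z = 1 := by rw [← add_div, div_self hz.ne']
  have key := hf.2 (one_div_pos.2 hx) (one_div_pos.2 hy) hinv_ne
    (by positivity : 0 < a * x / z) (by positivity : 0 < b * y / z) hweights
  rw [smul_one_div_add_smul_one_div a b z hx.ne' hy.ne', hab] at key
  simp only [smul_eq_mul] at key ⊢
  calc z * f (1 / z) < z * (a * x / z * f (1 / x) + b * y / z * f (1 / y)) :=
        mul_lt_mul_of_pos_left key hz
    _ = a * (x * f (1 / x)) + b * (y * f (1 / y)) := by field_simp
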